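/- arXiv:1503.02771 — 5 statements merged into one kernel-verified Lean document; each statement's English description precedes it below -/
import Mathlib

section
/- Fix a > 0 and define A(λ) = 2πa/λ + (π/λ²)·sinh(2λa) for λ > 0. The equation A'(λ) = 0 has a unique solution λ₀ > 0, and A attains its global minimum on (0,∞) at λ₀. -/
/-!
With `t = 2λa` one has `λ³ A'(λ) = π f(t)` for `f(t) = t cosh t - 2 sinh t - t`. Since
`f''(t) = t cosh t > 0`, `f` is strictly convex on `[0, ∞)`; as `f(0) = 0` and `f(2) < 0 < f(3)`, it has
exactly one positive zero `t₀`, and it is negative before and positive after it. Hence `A` decreases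
on `(0, t₀ / 2a]` and increases on `[t₀ / 2a, ∞)`.
-/

open Real Set

structure SignChangeAt (f : ℝ → ℝ) (l x₀ : ℝ) : Prop where
  lt : l < x₀
  apply_eq_zero : f x₀ = 0
  neg : ∀ x ∈ Ioo l x₀, f x < 0
  pos : ∀ x ∈ Ioi x₀, 0 < f x

namespace SignChangeAt

variable {f g : ℝ → ℝ} {l x₀ : ℝ}

theorem eq_of_apply_eq_zero (h : SignChangeAt f l x₀) {x : ℝ} (hx : x ∈ Ioi l) (hfx : f x = 0) :
    x = x₀ := by
  rcases lt_trichotomy x x₀ with hlt | heq | hgt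
  · exact absurd hfx (h.neg x ⟨hx, hlt⟩).ne
  · exact heq
  · exact absurd hfx (h.pos x hgt).ne'

theorem congr (h : SignChangeAt f l x₀) (hfg : EqOn f g (Ioi l)) : SignChangeAt g l x₀ where
  lt := h.lt
  apply_eq_zero := hfg h.lt ▸ h.apply_eq_zero
  neg x hx := hfg hx.1 ▸ h.neg x hx
  pos x hx := hfg (h.lt.trans hx) ▸ h.pos x hx

theorem pos_mul (h : SignChangeAt f l x₀) (hg : ∀ x ∈ Ioi l, 0 < g x) :
    SignChangeAt (fun x => g x * f x) l x₀ where
  lt := h.lt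
  apply_eq_zero := by simp only [h.apply_eq_zero, mul_zero]
  neg x hx := mul_neg_of_pos_of_neg (hg x hx.1) (h.neg x hx)
  pos x hx := mul_pos (hg x (h.lt.trans hx)) (h.pos x hx)

theorem comp_mul_left (h : SignChangeAt f 0 x₀) {c : ℝ} (hc : 0 < c) :
    SignChangeAt (fun x => f (c * x)) 0 (x₀ / c) where
  lt := div_pos h.lt hc
  apply_eq_zero := by simp only [mul_div_cancel₀ x₀ hc.ne', h.apply_eq_zero]
  neg x hx := h.neg (c * x) ⟨mul_pos hc hx.1, (lt_div_iff₀' hc).mp hx.2⟩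
  pos x hx := h.pos (c * x) ((div_lt_iff₀' hc).mp hx)

theorem isMinOn {F : ℝ → ℝ} (h : SignChangeAt f l x₀) (hF : ∀ x ∈ Ioi l, HasDerivAt F (f x) x) :
    IsMinOn F (Ioi l) x₀ := by
  have hcont : ContinuousOn F (Ioi l) := fun x hx => (hF x hx).continuousAt.continuousWithinAt
  have hanti : AntitoneOn F (Ioc l x₀) := by
    refine antitoneOn_of_hasDerivWithinAt_nonpos (f' := f) (convex_Ioc l x₀)
      (hcont.mono Ioc_subset_Ioi_self) ?_ ?_ <;> rw [interior_Ioc]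
    · exact fun x hx => (hF x hx.1).hasDerivWithinAt
    · exact fun x hx => (h.neg x hx).le
  have hmono : MonotoneOn F (Ici x₀) := by
    refine monotoneOn_of_hasDerivWithinAt_nonneg (f' := f) (convex_Ici x₀)
      (hcont.mono (Ici_subset_Ioi.mpr h.lt)) ?_ ?_ <;> rw [interior_Ici]
    · exact fun x hx => (hF x (h.lt.trans hx)).hasDerivWithinAt
    · exact fun x hx => (h.pos x hx).le
  intro x hx
  rcases le_total x x₀ with hle | hge
  · exact hanti ⟨hx, hle⟩ ⟨h.lt, le_rfl⟩ hle
  · exact hmono self_mem_Ici hge hge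

end SignChangeAt

theorem StrictConvexOn.signChangeAt {f : ℝ → ℝ} {l x₀ : ℝ} (hf : StrictConvexOn ℝ (Ici l) f)
    (hl : f l = 0) (hlx₀ : l < x₀) (hx₀ : f x₀ = 0) : SignChangeAt f l x₀ where
  lt := hlx₀
  apply_eq_zero := hx₀
  neg x hx := by
    have := hf.lt_on_openSegment self_mem_Ici hlx₀.le hlx₀.ne
      ((openSegment_eq_Ioo hlx₀).symm ▸ hx)
    rwa [hl, hx₀, max_self] at this
  pos x hx := by
    by_contra! hfx
    have hlx : l < x := hlx₀.trans hx
    have := hf.lt_on_openSegment self_mem_Ici hlx.le hlx.ne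
      ((openSegment_eq_Ioo hlx).symm ▸ ⟨hlx₀, hx⟩ : x₀ ∈ openSegment ℝ l x)
    rw [hl, hx₀, max_eq_left hfx] at this
    exact this.false

noncomputable def areaDerivNumerator (t : ℝ) : ℝ := t * cosh t - 2 * sinh t - t

theorem hasDerivAt_areaDerivNumerator (t : ℝ) :
    HasDerivAt areaDerivNumerator (t * sinh t - cosh t - 1) t := by
  have h := (((hasDerivAt_id t).mul (hasDerivAt_cosh t)).sub
    ((hasDerivAt_sinh t).const_mul 2)).sub (hasDerivAt_id t)
  refine h.congr_deriv ?_
  simp only [id]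
  ring

theorem continuous_areaDerivNumerator : Continuous areaDerivNumerator := by
  unfold areaDerivNumerator
  fun_prop

theorem strictConvexOn_areaDerivNumerator : StrictConvexOn ℝ (Ici 0) areaDerivNumerator := by
  have hf' : deriv areaDerivNumerator = fun t => t * sinh t - cosh t - 1 :=
    funext fun t => (hasDerivAt_areaDerivNumerator t).deriv
  have hf'' (t : ℝ) : HasDerivAt (fun t => t * sinh t - cosh t - 1) (t * cosh t) t := by
    refine ((((hasDerivAt_id t).mul (hasDerivAt_sinh t)).sub (hasDerivAt_cosh t)).sub
      (hasDerivAt_const t (1 : ℝ))).congr_deriv ?_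
    simp only [id]
    ring
  refine StrictMonoOn.strictConvexOn_of_deriv (convex_Ici 0)
    continuous_areaDerivNumerator.continuousOn ?_
  rw [hf', interior_Ici]
  exact strictMonoOn_of_hasDerivWithinAt_pos (convex_Ioi 0) (by fun_prop)
    (fun t _ => (hf'' t).hasDerivWithinAt) fun t ht => mul_pos (interior_subset ht) (cosh_pos t)

theorem areaDerivNumerator_two_neg : areaDerivNumerator 2 < 0 := by
  have h := cosh_sub_sinh (2 : ℝ)
  have hexp : exp (-2) < 1 := exp_lt_one_iff.mpr (by norm_num)
  unfold areaDerivNumerator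
  linarith

theorem areaDerivNumerator_three_pos : 0 < areaDerivNumerator 3 := by
  have h₁ := sinh_lt_cosh (3 : ℝ)
  have h₂ := self_lt_sinh_iff.mpr (by norm_num : (0 : ℝ) < 3)
  unfold areaDerivNumerator
  linarith

theorem exists_signChangeAt_areaDerivNumerator : ∃ t₀, SignChangeAt areaDerivNumerator 0 t₀ := by
  obtain ⟨t₀, ⟨h2, -⟩, hroot⟩ := intermediate_value_Ioo (by norm_num : (2 : ℝ) ≤ 3)
    continuous_areaDerivNumerator.continuousOn
    ⟨areaDerivNumerator_two_neg, areaDerivNumerator_three_pos⟩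
  exact ⟨t₀, strictConvexOn_areaDerivNumerator.signChangeAt (by simp [areaDerivNumerator])
    (by linarith) hroot⟩

noncomputable def catenoidArea (a lam : ℝ) : ℝ :=
  2 * π * a / lam + (π / lam ^ 2) * sinh (2 * lam * a)

noncomputable def catenoidAreaDeriv (a lam : ℝ) : ℝ :=
  -(2 * π * a) / lam ^ 2 - (2 * π / lam ^ 3) * sinh (2 * lam * a)
    + (2 * π * a / lam ^ 2) * cosh (2 * lam * a)

theorem hasDerivAt_catenoidArea (a : ℝ) {lam : ℝ} (hlam : lam ≠ 0) :
    HasDerivAt (catenoidArea a) (catenoidAreaDeriv a lam) lam := by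
  have hsinh : HasDerivAt (fun x => sinh (2 * x * a)) (cosh (2 * lam * a) * (2 * a)) lam := by
    simpa using (((hasDerivAt_id lam).const_mul 2).mul_const a).sinh
  have h := ((hasDerivAt_const lam (2 * π * a)).fun_div (hasDerivAt_id lam) hlam).add
    (((hasDerivAt_const lam π).fun_div (hasDerivAt_pow 2 lam) (pow_ne_zero 2 hlam)).mul hsinh)
  refine h.congr_deriv ?_
  simp only [catenoidAreaDeriv, id]
  field_simp
  ring

theorem catenoidAreaDeriv_eq (a : ℝ) {lam : ℝ} (hlam : lam ≠ 0) :
    catenoidAreaDeriv a lam = π / lam ^ 3 * areaDerivNumerator (2 * a * lam) := by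
  unfold catenoidAreaDeriv areaDerivNumerator
  field_simp
  ring_nf

theorem exists_signChangeAt_catenoidAreaDeriv {a : ℝ} (ha : 0 < a) :
    ∃ lam₀, SignChangeAt (catenoidAreaDeriv a) 0 lam₀ := by
  obtain ⟨t₀, ht₀⟩ := exists_signChangeAt_areaDerivNumerator
  have hscaled := (ht₀.comp_mul_left (mul_pos two_pos ha)).pos_mul
    (g := fun lam => π / lam ^ 3) fun lam hlam => div_pos pi_pos (pow_pos hlam 3)
  exact ⟨t₀ / (2 * a), hscaled.congr fun lam hlam => (catenoidAreaDeriv_eq a (ne_of_gt hlam)).symm⟩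

/-- A'(λ) = 0 has a unique positive solution λ₀, at which A attains its global
minimum on (0,∞), where A(λ) = 2πa/λ + (π/λ²)·sinh(2λa). -/
theorem catenoid_area_unique_min (a : ℝ) (ha : 0 < a) :
    ∃ lam₀ : ℝ, 0 < lam₀ ∧
      (-(2 * π * a) / lam₀ ^ 2 - (2 * π / lam₀ ^ 3) * Real.sinh (2 * lam₀ * a)
        + (2 * π * a / lam₀ ^ 2) * Real.cosh (2 * lam₀ * a) = 0) ∧
      (∀ lam : ℝ, 0 < lam →
        (-(2 * π * a) / lam ^ 2 - (2 * π / lam ^ 3) * Real.sinh (2 * lam * a)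
          + (2 * π * a / lam ^ 2) * Real.cosh (2 * lam * a) = 0) → lam = lam₀) ∧
      (∀ lam : ℝ, 0 < lam →
        2 * π * a / lam₀ + (π / lam₀ ^ 2) * Real.sinh (2 * lam₀ * a)
          ≤ 2 * π * a / lam + (π / lam ^ 2) * Real.sinh (2 * lam * a)) := by
  obtain ⟨lam₀, h⟩ := exists_signChangeAt_catenoidAreaDeriv ha
  have hmin := h.isMinOn fun lam hlam => hasDerivAt_catenoidArea a (ne_of_gt hlam)
  exact ⟨lam₀, h.lt, h.apply_eq_zero, fun lam hlam => h.eq_of_apply_eq_zero hlam,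
    fun lam hlam => hmin hlam⟩
end

section
/- Let β > 0 satisfy tanh(β) = 1/β and let a > 0. Then the minimum over all λ > 0 of the area 2πa/λ + (π/λ²)·sinh(2λa) equals (2πa²/β)·(1 + sinh(2β)/(2β)) and is attained exactly at λ = β/a. -/
/-!
Substituting `t = λa` gives `A(λ) = π a² f(λa)` with `f t = 2/t + sinh(2t)/t²`
(`catenoidWaistArea`), and `f' t = 4 sinh t (t sinh t - cosh t) / t³`. The factor
`t sinh t - cosh t` has derivative `t cosh t > 0`, so it is strictly increasing on `[0, ∞)`;
the hypothesis `tanh β = 1/β` says it vanishes at `β`. Hence `f` strictly decreases on `(0, β]`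
and strictly increases on `[β, ∞)`, so `β` is its unique minimiser, i.e. `λ = β/a` is the
unique minimiser of `A`.
-/

open Real Set

/-- The waist area for `a = 1`, divided by `π`. -/
noncomputable def catenoidWaistArea (t : ℝ) : ℝ := 2 / t + sinh (2 * t) / t ^ 2

lemma hasDerivAt_mul_sinh_sub_cosh (t : ℝ) :
    HasDerivAt (fun s : ℝ => s * sinh s - cosh s) (t * cosh t) t := by
  refine (((hasDerivAt_id t).mul (hasDerivAt_sinh t)).sub (hasDerivAt_cosh t)).congr_deriv ?_
  simp

lemma strictMonoOn_mul_sinh_sub_cosh :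
    StrictMonoOn (fun t : ℝ => t * sinh t - cosh t) (Ici 0) := by
  refine strictMonoOn_of_deriv_pos (convex_Ici 0) (by fun_prop) fun t ht => ?_
  rw [interior_Ici, mem_Ioi] at ht
  rw [(hasDerivAt_mul_sinh_sub_cosh t).deriv]
  exact mul_pos ht (cosh_pos t)

lemma mul_sinh_sub_cosh_eq_zero_of_tanh_eq {β : ℝ} (hβ : β ≠ 0) (h : tanh β = 1 / β) :
    β * sinh β - cosh β = 0 := by
  rw [tanh_eq_sinh_div_cosh, div_eq_div_iff (cosh_pos β).ne' hβ] at h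
  linarith

lemma hasDerivAt_catenoidWaistArea {t : ℝ} (ht : t ≠ 0) :
    HasDerivAt catenoidWaistArea (4 * sinh t * (t * sinh t - cosh t) / t ^ 3) t := by
  have hinv : HasDerivAt (fun s : ℝ => 2 / s) (-2 / t ^ 2) t := by
    refine ((hasDerivAt_const t (2 : ℝ)).div (hasDerivAt_id t) ht).congr_deriv ?_
    simp
  have hsinh : HasDerivAt (fun s : ℝ => sinh (2 * s)) (2 * cosh (2 * t)) t := by
    refine ((hasDerivAt_sinh (2 * t)).comp t ((hasDerivAt_id t).const_mul 2)).congr_deriv ?_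
    ring
  have hsq : HasDerivAt (fun s : ℝ => s ^ 2) (2 * t) t := by
    simpa using hasDerivAt_pow 2 t
  refine (hinv.add (hsinh.div hsq (pow_ne_zero 2 ht))).congr_deriv ?_
  rw [cosh_two_mul, sinh_two_mul, cosh_sq]
  field_simp
  ring

section Minimum

variable {β : ℝ} (hβ : 0 < β) (hcrit : β * sinh β - cosh β = 0)
include hβ hcrit

lemma strictAntiOn_catenoidWaistArea : StrictAntiOn catenoidWaistArea (Ioc 0 β) := by
  refine strictAntiOn_of_deriv_neg (convex_Ioc 0 β)
    (fun t ht => (hasDerivAt_catenoidWaistArea ht.1.ne').continuousAt.continuousWithinAt)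
    fun t ht => ?_
  rw [interior_Ioc] at ht
  rw [(hasDerivAt_catenoidWaistArea ht.1.ne').deriv]
  have hneg : t * sinh t - cosh t < 0 :=
    hcrit ▸ strictMonoOn_mul_sinh_sub_cosh ht.1.le hβ.le ht.2
  have hsinh : 0 < sinh t := sinh_pos_iff.2 ht.1
  exact div_neg_of_neg_of_pos (mul_neg_of_pos_of_neg (by positivity) hneg) (pow_pos ht.1 3)

lemma strictMonoOn_catenoidWaistArea : StrictMonoOn catenoidWaistArea (Ici β) := by
  refine strictMonoOn_of_deriv_pos (convex_Ici β)
    (fun t ht =>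
      (hasDerivAt_catenoidWaistArea (hβ.trans_le ht).ne').continuousAt.continuousWithinAt)
    fun t ht => ?_
  rw [interior_Ici, mem_Ioi] at ht
  have ht0 : 0 < t := hβ.trans ht
  rw [(hasDerivAt_catenoidWaistArea ht0.ne').deriv]
  have hpos : 0 < t * sinh t - cosh t :=
    hcrit ▸ strictMonoOn_mul_sinh_sub_cosh hβ.le ht0.le ht
  have hsinh : 0 < sinh t := sinh_pos_iff.2 ht0
  positivity

lemma catenoidWaistArea_lt {t : ℝ} (ht : 0 < t) (htβ : t ≠ β) :
    catenoidWaistArea β < catenoidWaistArea t := by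
  rcases htβ.lt_or_gt with h | h
  · exact strictAntiOn_catenoidWaistArea hβ hcrit ⟨ht, h.le⟩ ⟨hβ, le_rfl⟩ h
  · exact strictMonoOn_catenoidWaistArea hβ hcrit (mem_Ici.2 le_rfl) h.le h

end Minimum

lemma waist_area_eq_mul_catenoidWaistArea {lam a : ℝ} (hlam : lam ≠ 0) (ha : a ≠ 0) :
    2 * π * a / lam + (π / lam ^ 2) * sinh (2 * lam * a)
      = π * a ^ 2 * catenoidWaistArea (lam * a) := by
  rw [catenoidWaistArea, ← mul_assoc]
  field_simp

lemma min_waist_area_eq_mul_catenoidWaistArea {a β : ℝ} (hβ : β ≠ 0) :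
    (2 * π * a ^ 2 / β) * (1 + sinh (2 * β) / (2 * β)) = π * a ^ 2 * catenoidWaistArea β := by
  rw [catenoidWaistArea]
  field_simp

/-- The minimum over λ > 0 of A(λ) = 2πa/λ + (π/λ²)·sinh(2λa) equals
(2πa²/β)(1 + sinh(2β)/(2β)) and is attained exactly at λ = β/a. -/
theorem catenoid_area_min_value (β a : ℝ) (hβ : 0 < β) (htanh : Real.tanh β = 1 / β)
    (ha : 0 < a) :
    (2 * π * a / (β / a) + (π / (β / a) ^ 2) * Real.sinh (2 * (β / a) * a)
      = (2 * π * a ^ 2 / β) * (1 + Real.sinh (2 * β) / (2 * β))) ∧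
    (∀ lam : ℝ, 0 < lam →
      (2 * π * a ^ 2 / β) * (1 + Real.sinh (2 * β) / (2 * β))
        ≤ 2 * π * a / lam + (π / lam ^ 2) * Real.sinh (2 * lam * a)) ∧
    (∀ lam : ℝ, 0 < lam →
      2 * π * a / lam + (π / lam ^ 2) * Real.sinh (2 * lam * a)
        = (2 * π * a ^ 2 / β) * (1 + Real.sinh (2 * β) / (2 * β)) → lam = β / a) := by
  have hcrit := mul_sinh_sub_cosh_eq_zero_of_tanh_eq hβ.ne' htanh
  have hπa : 0 < π * a ^ 2 := by positivity
  have hlt : ∀ lam, 0 < lam → lam * a ≠ β →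
      π * a ^ 2 * catenoidWaistArea β < π * a ^ 2 * catenoidWaistArea (lam * a) :=
    fun lam hlam hne => mul_lt_mul_of_pos_left
      (catenoidWaistArea_lt hβ hcrit (mul_pos hlam ha) hne) hπa
  rw [min_waist_area_eq_mul_catenoidWaistArea hβ.ne']
  refine ⟨?_, fun lam hlam => ?_, fun lam hlam heq => ?_⟩
  · rw [waist_area_eq_mul_catenoidWaistArea (div_pos hβ ha).ne' ha.ne',
      div_mul_cancel₀ β ha.ne']
  · rw [waist_area_eq_mul_catenoidWaistArea hlam.ne' ha.ne']
    rcases eq_or_ne (lam * a) β with h | h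
    · rw [h]
    · exact (hlt lam hlam h).le
  · rw [waist_area_eq_mul_catenoidWaistArea hlam.ne' ha.ne'] at heq
    by_contra hne
    exact (hlt lam hlam fun h => hne (eq_div_of_mul_eq ha.ne' h)).ne' heq
end

section
/- For the catenoid C = {(x,y,z) ∈ ℝ³ : cosh z = √(x²+y²)}, the truncated piece C ∩ {-β ≤ z ≤ β} with tanh β = 1/β has the property that the rays from the origin are tangent to C along the boundary circles z = ±β. -/
open Real

/-! The equation tanh β = 1/β says β sinh β = cosh β, and since z ↦ z sinh z and cosh are even,
the same holds at z = -β. At any height z with z sinh z = cosh z, the position vector of the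
catenoid point X(θ, z) is exactly z times the tangent vector X_z, so the ray through it lies in
the tangent plane. -/

theorem mul_sinh_eq_cosh_of_tanh_eq_inv {β : ℝ} (hβ : β ≠ 0) (h : tanh β = 1 / β) :
    β * sinh β = cosh β := by
  rw [tanh_eq_sinh_div_cosh, div_eq_div_iff (cosh_pos β).ne' hβ, one_mul] at h
  rw [mul_comm, h]

theorem neg_mul_sinh_neg (x : ℝ) : -x * sinh (-x) = x * sinh x := by
  rw [sinh_neg, neg_mul_neg]

theorem catenoid_eq_smul_deriv_height_of_mul_sinh_eq_cosh {z : ℝ} (θ : ℝ)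
    (h : z * sinh z = cosh z) :
    (cosh z * cos θ, cosh z * sin θ, z) = z • (sinh z * cos θ, sinh z * sin θ, (1 : ℝ)) := by
  simp only [Prod.smul_mk, smul_eq_mul, ← h, mul_one, mul_assoc]

/-- For the catenoid parametrized by X(θ,z) = (cosh z cos θ, cosh z sin θ, z),
if tanh β = 1/β with β > 0, then at every boundary point p with z = ±β the
position vector p lies in the tangent plane, i.e. p is a linear combination of
the coordinate tangent vectors X_θ and X_z. -/
theorem rays_tangent_to_catenoid (β : ℝ) (hβ : 0 < β) (htanh : Real.tanh β = 1 / β) :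
    ∀ θ : ℝ, ∀ ε : ℝ, ε = 1 ∨ ε = -1 →
      ∃ s t : ℝ,
        (Real.cosh (ε * β) * Real.cos θ, Real.cosh (ε * β) * Real.sin θ, ε * β)
          = s • (-(Real.cosh (ε * β) * Real.sin θ), Real.cosh (ε * β) * Real.cos θ, (0 : ℝ))
            + t • (Real.sinh (ε * β) * Real.cos θ, Real.sinh (ε * β) * Real.sin θ, (1 : ℝ)) := by
  intro θ ε hε
  have hβ_eq : β * sinh β = cosh β := mul_sinh_eq_cosh_of_tanh_eq_inv hβ.ne' htanh
  have hεβ_eq : ε * β * sinh (ε * β) = cosh (ε * β) := by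
    rcases hε with rfl | rfl
    · simpa only [one_mul] using hβ_eq
    · simpa only [neg_one_mul, neg_mul_sinh_neg, cosh_neg] using hβ_eq
  refine ⟨0, ε * β, ?_⟩
  rw [zero_smul, zero_add]
  exact catenoid_eq_smul_deriv_height_of_mul_sinh_eq_cosh θ hεβ_eq
end

section
/- Fix f > 0, a > 0. For any increasing function h : [-a,a] → ℝ satisfying h(u₂) - h(u₁) ≥ (2π/f)(u₂-u₁) for u₁ ≤ u₂, we have ∫_{-a}^{a} f·cosh²(h(u)) du ≥ ∫_{-a}^{a} f·cosh²((2π/f)u) du. -/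
open Real Set MeasureTheory

/-!
Pair `u` with `-u`. The slope condition gives `h u - h (-u) ≥ 2 k u ≥ 0` for `u ≥ 0`, and
`cosh² x + cosh² y = 1 + cosh (x + y) cosh (x - y) ≥ 1 + cosh (x - y)`, so
`cosh² (h u) + cosh² (h (-u)) ≥ 1 + cosh (2 k u) = cosh² (k u) + cosh² (-k u)`.
Integrating over `[0, a]` gives the inequality on `[-a, a]`.
-/

theorem two_mul_cosh_sq_le_cosh_sq_add_cosh_sq {s x y : ℝ} (h : 2 * |s| ≤ |x - y|) :
    2 * cosh s ^ 2 ≤ cosh x ^ 2 + cosh y ^ 2 := by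
  have hsum : cosh x ^ 2 + cosh y ^ 2 = 1 + cosh (x + y) * cosh (x - y) := by
    rw [cosh_add, cosh_sub]
    linear_combination
      (-sinh y ^ 2) * cosh_sq_sub_sinh_sq x - (cosh x ^ 2 - 1) * cosh_sq_sub_sinh_sq y
  have hdouble : 2 * cosh s ^ 2 = 1 + cosh (2 * s) := by
    rw [cosh_two_mul, cosh_sq]; ring
  have hcosh : cosh (2 * s) ≤ cosh (x - y) := by
    rwa [cosh_le_cosh, abs_mul, abs_two]
  rw [hsum, hdouble]
  gcongr
  exact hcosh.trans (le_mul_of_one_le_left (cosh_pos _).le (one_le_cosh _))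

theorem MonotoneOn.intervalIntegrable_comp {E : Type*} [NormedAddCommGroup E] {g : ℝ → E}
    (hg : Continuous g) {h : ℝ → ℝ} {a b : ℝ} (hh : MonotoneOn h (uIcc a b)) :
    IntervalIntegrable (g ∘ h) volume a b := by
  rw [intervalIntegrable_iff']
  obtain ⟨C, hC⟩ := isCompact_Icc.exists_bound_of_continuousOn
    (hg.continuousOn (s := Icc (h (min a b)) (h (max a b))))
  refine IntegrableOn.of_bound measure_Icc_lt_top
    (hg.comp_aestronglyMeasurable
      (aemeasurable_restrict_of_monotoneOn measurableSet_uIcc hh).aestronglyMeasurable) C ?_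
  refine (ae_restrict_iff' measurableSet_uIcc).2 (ae_of_all _ fun u hu ↦ hC _ ?_)
  exact ⟨hh ⟨le_rfl, min_le_max⟩ hu hu.1, hh hu ⟨min_le_max, le_rfl⟩ hu.2⟩

theorem intervalIntegral.integral_neg_self_eq_integral_add_comp_neg {E : Type*}
    [NormedAddCommGroup E] [NormedSpace ℝ E] {g : ℝ → E} {a : ℝ} (ha : 0 ≤ a)
    (hg : IntervalIntegrable g volume (-a) a) :
    ∫ u in (-a)..a, g u = ∫ u in 0..a, (g u + g (-u)) := by
  have hneg : IntervalIntegrable g volume (-a) 0 :=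
    hg.mono_set (uIcc_subset_uIcc_left (by simp [ha]))
  have hpos : IntervalIntegrable g volume 0 a :=
    hg.mono_set (uIcc_subset_uIcc_right (by simp [ha]))
  have hneg' : IntervalIntegrable (fun u ↦ g (-u)) volume 0 a := by
    simpa using ((IntervalIntegrable.iff_comp_neg).1 hneg).symm
  rw [intervalIntegral.integral_add hpos hneg', intervalIntegral.integral_comp_neg, neg_zero,
    add_comm, intervalIntegral.integral_add_adjacent_intervals hneg hpos]

theorem intervalIntegral.integral_mono_of_add_comp_neg_le {g₁ g₂ : ℝ → ℝ} {a : ℝ} (ha : 0 ≤ a)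
    (hg₁ : IntervalIntegrable g₁ volume (-a) a) (hg₂ : IntervalIntegrable g₂ volume (-a) a)
    (hle : ∀ u ∈ Icc 0 a, g₁ u + g₁ (-u) ≤ g₂ u + g₂ (-u)) :
    ∫ u in (-a)..a, g₁ u ≤ ∫ u in (-a)..a, g₂ u := by
  rw [← sub_nonneg, ← intervalIntegral.integral_sub hg₂ hg₁,
    integral_neg_self_eq_integral_add_comp_neg ha (hg₂.sub hg₁)]
  exact intervalIntegral.integral_nonneg ha fun u hu ↦ by linarith [hle u hu]

theorem integral_cosh_sq_mul_le_integral_cosh_sq_comp {k a : ℝ} (hk : 0 ≤ k) (ha : 0 ≤ a)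
    {h : ℝ → ℝ} (hslope : ∀ u₁ u₂, u₁ ∈ Icc (-a) a → u₂ ∈ Icc (-a) a → u₁ ≤ u₂ →
      k * (u₂ - u₁) ≤ h u₂ - h u₁) :
    ∫ u in (-a)..a, cosh (k * u) ^ 2 ≤ ∫ u in (-a)..a, cosh (h u) ^ 2 := by
  have hmono : MonotoneOn h (uIcc (-a) a) := by
    rw [uIcc_of_le (by linarith)]
    intro u₁ hu₁ u₂ hu₂ hle
    linarith [hslope u₁ u₂ hu₁ hu₂ hle, mul_nonneg hk (sub_nonneg.2 hle)]
  refine intervalIntegral.integral_mono_of_add_comp_neg_le ha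
    ((by fun_prop : Continuous fun u ↦ cosh (k * u) ^ 2).intervalIntegrable _ _)
    (hmono.intervalIntegrable_comp (g := fun x ↦ cosh x ^ 2) (by fun_prop)) fun u hu ↦ ?_
  have hku : 0 ≤ k * u := mul_nonneg hk hu.1
  have hgap := hslope (-u) u ⟨by linarith [hu.2], by linarith [hu.1]⟩
    ⟨by linarith [hu.1], hu.2⟩ (by linarith [hu.1])
  rw [mul_neg, cosh_neg, ← two_mul]
  apply two_mul_cosh_sq_le_cosh_sq_add_cosh_sq
  rw [abs_of_nonneg hku, abs_of_nonneg (by linarith)]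
  linarith

/-- For any increasing h on [-a,a] with slope at least 2π/f,
∫_{-a}^{a} f·cosh²(h(u)) du ≥ ∫_{-a}^{a} f·cosh²((2π/f)u) du. -/
theorem area_ge_catenoid (f a : ℝ) (hf : 0 < f) (ha : 0 < a) (h : ℝ → ℝ)
    (hslope : ∀ u₁ u₂, u₁ ∈ Icc (-a) a → u₂ ∈ Icc (-a) a → u₁ ≤ u₂ →
      (2 * π / f) * (u₂ - u₁) ≤ h u₂ - h u₁) :
    (∫ u in (-a)..a, f * Real.cosh ((2 * π / f) * u) ^ 2)
      ≤ ∫ u in (-a)..a, f * Real.cosh (h u) ^ 2 := by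
  simp only [intervalIntegral.integral_const_mul]
  exact mul_le_mul_of_nonneg_left
    (integral_cosh_sq_mul_le_integral_cosh_sq_comp (by positivity) ha.le hslope) hf.le
end

section
/- Let β > 0 satisfy tanh β = 1/β. Then for every f > 0 and a > 0, fa + (f²/4π)·sinh(4πa/f) ≥ (2πa²/β)·(1 + sinh(2β)/(2β)), i.e., the area of any symmetric catenoidal waist in the slab of height 2a is at least the area of the maximally stable waist (a/β)·C^β_{-β}. -/
open Real Set

/-!
With `t = 4πa/f` the waist area is `4πa² φ(t)`, where `φ(t) = (t + sinh t)/t²` (`waistProfile`),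
and the bound is `4πa² φ(2β)`; so it suffices that `2β` minimises `φ` on `(0, ∞)`. Now
`t³ φ'(t) = ρ(t) := t cosh t - t - 2 sinh t` (`waistProfileNumer`), and `ρ'' = t cosh t > 0`, so
`ρ` is strictly convex on `[0, ∞)`. It vanishes at `0` and, since `cosh β = β sinh β`, at `2β`;
hence `ρ < 0` on `(0, 2β)` and `ρ > 0` on `(2β, ∞)`.
-/

noncomputable def waistProfile (t : ℝ) : ℝ := (t + sinh t) / t ^ 2

noncomputable def waistProfileNumer (t : ℝ) : ℝ := t * cosh t - t - 2 * sinh t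

lemma hasDerivAt_waistProfileNumer (t : ℝ) :
    HasDerivAt waistProfileNumer (t * sinh t - cosh t - 1) t := by
  have h := (((hasDerivAt_id' t).mul (hasDerivAt_cosh t)).sub (hasDerivAt_id' t)).sub
    ((hasDerivAt_sinh t).const_mul 2)
  refine h.congr_deriv ?_
  ring

lemma hasDerivAt_waistProfileNumer_deriv (t : ℝ) :
    HasDerivAt (fun t => t * sinh t - cosh t - 1) (t * cosh t) t := by
  have h := (((hasDerivAt_id' t).mul (hasDerivAt_sinh t)).sub (hasDerivAt_cosh t)).sub_const 1
  refine h.congr_deriv ?_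
  ring

lemma hasDerivAt_waistProfile {t : ℝ} (ht : t ≠ 0) :
    HasDerivAt waistProfile (waistProfileNumer t / t ^ 3) t := by
  have h := ((hasDerivAt_id' t).add (hasDerivAt_sinh t)).div (hasDerivAt_pow 2 t) (by positivity)
  refine h.congr_deriv ?_
  simp only [waistProfileNumer, Pi.add_apply, Nat.cast_ofNat]
  field_simp
  ring

lemma strictConvexOn_waistProfileNumer : StrictConvexOn ℝ (Ici 0) waistProfileNumer := by
  have hderiv : deriv waistProfileNumer = fun t => t * sinh t - cosh t - 1 :=
    funext fun t => (hasDerivAt_waistProfileNumer t).deriv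
  refine StrictMonoOn.strictConvexOn_of_deriv (convex_Ici 0)
    (by unfold waistProfileNumer; fun_prop) ?_
  rw [hderiv, interior_Ici]
  refine strictMonoOn_of_hasDerivWithinAt_pos (convex_Ioi 0) (by fun_prop)
    (fun t _ => (hasDerivAt_waistProfileNumer_deriv t).hasDerivWithinAt) fun t ht => ?_
  rw [interior_Ioi] at ht
  exact mul_pos ht (cosh_pos t)

lemma waistProfileNumer_zero : waistProfileNumer 0 = 0 := by
  simp [waistProfileNumer]

lemma waistProfileNumer_two_mul_eq_zero {β : ℝ} (h : cosh β = β * sinh β) :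
    waistProfileNumer (2 * β) = 0 := by
  rw [waistProfileNumer, cosh_two_mul, sinh_two_mul]
  linear_combination (-4 * sinh β) * h + 2 * β * cosh_sq_sub_sinh_sq β

lemma cosh_eq_mul_sinh_of_tanh_eq_inv {β : ℝ} (hβ : β ≠ 0) (htanh : tanh β = 1 / β) :
    cosh β = β * sinh β := by
  rw [tanh_eq_sinh_div_cosh, div_eq_div_iff (cosh_pos β).ne' hβ] at htanh
  linarith

section ConvexZeros

variable {g : ℝ → ℝ} {r x : ℝ}

lemma StrictConvexOn.neg_of_mem_Ioo_of_eq_zero (hg : StrictConvexOn ℝ (Ici 0) g) (h0 : g 0 = 0)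
    (hr : g r = 0) (hx : x ∈ Ioo 0 r) : g x < 0 := by
  have h := hg.secant_strict_mono self_mem_Ici (mem_Ici.2 hx.1.le)
    (mem_Ici.2 (hx.1.trans hx.2).le) hx.1.ne' (hx.1.trans hx.2).ne' hx.2
  simp only [h0, hr, sub_zero, zero_div] at h
  exact neg_of_div_neg_left h hx.1.le

lemma StrictConvexOn.pos_of_lt_of_eq_zero (hg : StrictConvexOn ℝ (Ici 0) g) (h0 : g 0 = 0)
    (hr0 : 0 < r) (hr : g r = 0) (hx : r < x) : 0 < g x := by
  have h := hg.secant_strict_mono self_mem_Ici (mem_Ici.2 hr0.le)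
    (mem_Ici.2 (hr0.trans hx).le) hr0.ne' (hr0.trans hx).ne' hx
  simp only [h0, hr, sub_zero, zero_div] at h
  exact (div_pos_iff_of_pos_right (hr0.trans hx)).1 h

end ConvexZeros

lemma isMinOn_waistProfile {r : ℝ} (hr0 : 0 < r) (hr : waistProfileNumer r = 0) :
    IsMinOn waistProfile (Ioi 0) r := by
  have hcont : ContinuousOn waistProfile (Ioi 0) := fun t ht =>
    (hasDerivAt_waistProfile (ne_of_gt ht)).continuousAt.continuousWithinAt
  have hderiv : ∀ s ⊆ Ioi 0, ∀ t ∈ s,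
      HasDerivWithinAt waistProfile (waistProfileNumer t / t ^ 3) s t := fun s hs t ht =>
    (hasDerivAt_waistProfile (ne_of_gt (hs ht))).hasDerivWithinAt
  have hanti : AntitoneOn waistProfile (Ioc 0 r) := by
    refine antitoneOn_of_hasDerivWithinAt_nonpos (convex_Ioc 0 r)
      (hcont.mono Ioc_subset_Ioi_self) (hderiv _ (interior_subset.trans Ioc_subset_Ioi_self))
      fun t ht => ?_
    rw [interior_Ioc] at ht
    exact div_nonpos_of_nonpos_of_nonneg (strictConvexOn_waistProfileNumer.neg_of_mem_Ioo_of_eq_zero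
      waistProfileNumer_zero hr ht).le (pow_pos ht.1 3).le
  have hmono : MonotoneOn waistProfile (Ici r) := by
    refine monotoneOn_of_hasDerivWithinAt_nonneg (convex_Ici r)
      (hcont.mono (Ici_subset_Ioi.2 hr0)) (hderiv _ (interior_subset.trans (Ici_subset_Ioi.2 hr0)))
      fun t ht => ?_
    rw [interior_Ici] at ht
    exact div_nonneg (strictConvexOn_waistProfileNumer.pos_of_lt_of_eq_zero
      waistProfileNumer_zero hr0 hr ht).le (pow_pos (hr0.trans ht) 3).le
  intro t (ht : 0 < t)
  rcases le_total t r with htr | hrt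
  · exact hanti ⟨ht, htr⟩ ⟨hr0, le_rfl⟩ htr
  · exact hmono self_mem_Ici hrt hrt

/-- If tanh β = 1/β with β > 0, then for all f > 0 and a > 0,
fa + (f²/4π)·sinh(4πa/f) ≥ (2πa²/β)(1 + sinh(2β)/(2β)): any symmetric
catenoidal waist in the slab has area at least that of the maximally stable waist. -/
theorem symmetric_waist_area_ge (β : ℝ) (hβ : 0 < β) (htanh : Real.tanh β = 1 / β)
    (f a : ℝ) (hf : 0 < f) (ha : 0 < a) :
    (2 * π * a ^ 2 / β) * (1 + Real.sinh (2 * β) / (2 * β))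
      ≤ f * a + (f ^ 2 / (4 * π)) * Real.sinh (4 * π * a / f) := by
  have hroot : waistProfileNumer (2 * β) = 0 :=
    waistProfileNumer_two_mul_eq_zero (cosh_eq_mul_sinh_of_tanh_eq_inv hβ.ne' htanh)
  have hmin : waistProfile (2 * β) ≤ waistProfile (4 * π * a / f) :=
    isMinOn_waistProfile (by positivity) hroot (mem_Ioi.2 (by positivity))
  have hlhs : (2 * π * a ^ 2 / β) * (1 + sinh (2 * β) / (2 * β))
      = 4 * π * a ^ 2 * waistProfile (2 * β) := by
    unfold waistProfile
    field_simp
    ring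
  have hrhs : f * a + (f ^ 2 / (4 * π)) * sinh (4 * π * a / f)
      = 4 * π * a ^ 2 * waistProfile (4 * π * a / f) := by
    unfold waistProfile
    field_simp
  rw [hlhs, hrhs]
  exact mul_le_mul_of_nonneg_left hmin (by positivity)
end
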